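/- The degree of any ring of size k (k ≥ 2) in the disjoint compatibility graph equals the number of non-crossing partitions of {1,...,k} (cyclically ordered) with no part of size 1. -/
import Mathlib


/-- Two chords of points in convex position cross (in the order a < c < b < d). -/
def Cross {n : ℕ} (e f : Sym2 (Fin n)) : Prop :=
  ∃ a b c d : Fin n, e = s(a, b) ∧ f = s(c, d) ∧ a < c ∧ c < b ∧ b < d

/-- A non-crossing perfect matching of `n` points in convex position. -/
def IsNCMatching {n : ℕ} (M : Finset (Sym2 (Fin n))) : Prop :=
  (∀ e ∈ M, ¬ e.IsDiag) ∧
  (∀ v : Fin n, ∃! e, e ∈ M ∧ v ∈ e) ∧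
  (∀ e ∈ M, ∀ f ∈ M, ¬ Cross e f)

/-- Disjoint compatibility: no common edge, no crossing edges. -/
def DisjCompat {n : ℕ} (M M' : Finset (Sym2 (Fin n))) : Prop :=
  (∀ e ∈ M, e ∉ M') ∧ (∀ e ∈ M, ∀ f ∈ M', ¬ Cross e f ∧ ¬ Cross f e)

/-- Cyclic shift of an index by `j`. -/
def cyc {n : ℕ} (i : Fin n) (j : ℕ) : Fin n :=
  ⟨((i : ℕ) + j) % n, Nat.mod_lt _ i.pos⟩

def blockEdges {n : ℕ} (i : Fin n) : Finset (Sym2 (Fin n)) :=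
  {s(i, cyc i 3), s(cyc i 1, cyc i 2)}

def antiblockEdges {n : ℕ} (i : Fin n) : Finset (Sym2 (Fin n)) :=
  {s(i, cyc i 1), s(cyc i 2, cyc i 3)}

def IsBlock {n : ℕ} (M : Finset (Sym2 (Fin n))) (i : Fin n) : Prop :=
  blockEdges i ⊆ M

def IsAntiblock {n : ℕ} (M : Finset (Sym2 (Fin n))) (i : Fin n) : Prop :=
  antiblockEdges i ⊆ M

def IsSepPair {n : ℕ} (M S : Finset (Sym2 (Fin n))) : Prop :=
  (∃ i, S = blockEdges i ∨ S = antiblockEdges i) ∧ S ⊆ M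

/-- Insert a block (4 new consecutive points, outer edge and nested inner edge)
into a matching, at the gap after the first `t` points. -/
def insertBlock {n : ℕ} (M : Finset (Sym2 (Fin n))) (t : Fin (n+1)) :
    Finset (Sym2 (Fin (n+4))) :=
  M.image (Sym2.map (fun i : Fin n =>
    if (i : ℕ) < (t : ℕ) then (⟨(i : ℕ), by have := i.isLt; omega⟩ : Fin (n+4))
    else ⟨(i : ℕ) + 4, by have := i.isLt; omega⟩)) ∪
  {s((⟨(t : ℕ), by have := t.isLt; omega⟩ : Fin (n+4)),
     ⟨(t : ℕ) + 3, by have := t.isLt; omega⟩),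
   s((⟨(t : ℕ) + 1, by have := t.isLt; omega⟩ : Fin (n+4)),
     ⟨(t : ℕ) + 2, by have := t.isLt; omega⟩)}

inductive IsIMatching : ∀ n : ℕ, Finset (Sym2 (Fin n)) → Prop
  | base : IsIMatching 2 {s(0, 1)}
  | step {n : ℕ} (M : Finset (Sym2 (Fin n))) (t : Fin (n+1)) :
      IsIMatching n M → IsIMatching (n+4) (insertBlock M t)

inductive IsLMatching : ∀ n : ℕ, Finset (Sym2 (Fin n)) → Prop
  | ring2a : IsLMatching 4 {s(0, 1), s(2, 3)}
  | ring2b : IsLMatching 4 {s(1, 2), s(3, 0)}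
  | ring3a : IsLMatching 6 {s(0, 1), s(2, 3), s(4, 5)}
  | ring3b : IsLMatching 6 {s(1, 2), s(3, 4), s(5, 0)}
  | step {n : ℕ} (M : Finset (Sym2 (Fin n))) (t : Fin (n+1)) :
      IsLMatching n M → IsLMatching (n+4) (insertBlock M t)

/-- A ring: a non-crossing perfect matching all of whose edges join consecutive
points of the cyclic order. -/
def IsRing {n : ℕ} (M : Finset (Sym2 (Fin n))) : Prop :=
  IsNCMatching M ∧ ∀ e ∈ M, ∃ i : Fin n, e = s(i, cyc i 1)

/-- Two parts of a partition of cyclically ordered points interleave. -/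
def PartCross {n : ℕ} (A B : Finset (Fin n)) : Prop :=
  ∃ a ∈ A, ∃ a' ∈ A, ∃ b ∈ B, ∃ b' ∈ B, a < b ∧ b < a' ∧ a' < b'

/-- A non-crossing partition of the cyclically ordered `k`-set with no singleton
parts. -/
def IsNCPartitionNoSingletons {n : ℕ} (P : Finset (Finset (Fin n))) : Prop :=
  (∀ A ∈ P, 2 ≤ A.card) ∧
  (∀ v : Fin n, ∃! A, A ∈ P ∧ v ∈ A) ∧
  (∀ A ∈ P, ∀ B ∈ P, A ≠ B → ¬ PartCross A B)

open Finset
namespace RingProof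

lemma even_card_of_invol {α : Type*} [DecidableEq α] :
    ∀ (T : Finset α) (f : α → α), (∀ x ∈ T, f x ∈ T) → (∀ x ∈ T, f (f x) = x) →
    (∀ x ∈ T, f x ≠ x) → Even T.card := by
  intro T
  induction T using Finset.strongInduction with
  | _ T ih =>
    intro f hf hinv hne
    rcases T.eq_empty_or_nonempty with rfl | ⟨x, hx⟩
    · simp
    · have hfx := hf x hx
      have h2 : ({x, f x} : Finset α) ⊆ T := by
        intro y hy; simp only [Finset.mem_insert, Finset.mem_singleton] at hy
        rcases hy with rfl | rfl <;> assumption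
      have hcard2 : ({x, f x} : Finset α).card = 2 := Finset.card_pair (Ne.symm (hne x hx))
      have hss : T \ {x, f x} ⊂ T := Finset.sdiff_ssubset h2 ⟨x, by simp⟩
      have c1 : ∀ y ∈ T \ {x, f x}, f y ∈ T \ {x, f x} := by
        intro y hy
        simp only [Finset.mem_sdiff, Finset.mem_insert, Finset.mem_singleton] at hy ⊢
        obtain ⟨hyT, hy2⟩ := hy
        push_neg at hy2 ⊢
        refine ⟨hf y hyT, fun h => ?_, fun h => ?_⟩
        · apply hy2.2; rw [← hinv y hyT, h]
        · apply hy2.1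
          have := congrArg f h
          rwa [hinv y hyT, hinv x hx] at this
      have hrec := ih _ hss f c1 (fun y hy => hinv y (Finset.mem_sdiff.1 hy).1)
        (fun y hy => hne y (Finset.mem_sdiff.1 hy).1)
      have hcard : T.card = (T \ {x, f x}).card + 2 := by
        rw [Finset.card_sdiff_of_subset h2, hcard2]
        have := Finset.card_le_card h2
        omega
      rw [hcard]
      obtain ⟨c, hc⟩ := hrec
      exact ⟨c + 1, by omega⟩

end RingProof
open Finset
namespace RingProof

lemma cross_cases {n : ℕ} {a b c d : Fin n} (h : Cross s(a,b) s(c,d)) :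
    ((a:ℕ) < c ∧ (c:ℕ) < b ∧ (b:ℕ) < d) ∨ ((a:ℕ) < d ∧ (d:ℕ) < b ∧ (b:ℕ) < c) ∨
    ((b:ℕ) < c ∧ (c:ℕ) < a ∧ (a:ℕ) < d) ∨ ((b:ℕ) < d ∧ (d:ℕ) < a ∧ (a:ℕ) < c) := by
  obtain ⟨x, y, z, w, he, hf, h1, h2, h3⟩ := h
  rw [Sym2.eq_iff] at he hf
  rw [Fin.lt_def] at h1 h2 h3
  rcases he with ⟨rfl, rfl⟩ | ⟨rfl, rfl⟩ <;> rcases hf with ⟨rfl, rfl⟩ | ⟨rfl, rfl⟩ <;> tauto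

lemma cross_intro {n : ℕ} {a b c d : Fin n} (h1 : (a:ℕ) < c) (h2 : (c:ℕ) < b) (h3 : (b:ℕ) < d) :
    Cross s(a,b) s(c,d) :=
  ⟨a, b, c, d, rfl, rfl, Fin.lt_def.2 h1, Fin.lt_def.2 h2, Fin.lt_def.2 h3⟩

section Matching
variable {n : ℕ} {M : Finset (Sym2 (Fin n))}

/-- the partner of a vertex in a matching -/
noncomputable def pr (hM : IsNCMatching M) (v : Fin n) : Fin n :=
  Sym2.Mem.other' (Finset.choose_property (v ∈ ·) M (hM.2.1 v))

lemma pr_edge (hM : IsNCMatching M) (v : Fin n) : s(v, pr hM v) ∈ M := by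
  unfold pr
  rw [Sym2.other_spec' (Finset.choose_property (v ∈ ·) M (hM.2.1 v))]
  exact Finset.choose_mem _ M (hM.2.1 v)

lemma pr_spec (hM : IsNCMatching M) {v w : Fin n} (h : s(v,w) ∈ M) : w = pr hM v := by
  have h1 := pr_edge hM v
  have := (hM.2.1 v).unique ⟨h, by simp⟩ ⟨h1, by simp⟩
  rw [Sym2.eq_iff] at this
  rcases this with ⟨-, h⟩ | ⟨h1, h2⟩
  · exact h
  · rw [h2, ← h1]

lemma pr_ne (hM : IsNCMatching M) (v : Fin n) : pr hM v ≠ v := by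
  intro h
  have := pr_edge hM v
  rw [h] at this
  exact hM.1 _ this (by simp)

lemma pr_invol (hM : IsNCMatching M) (v : Fin n) : pr hM (pr hM v) = v := by
  have := pr_edge hM v
  rw [Sym2.eq_swap] at this
  exact (pr_spec hM this).symm

lemma edge_form (hM : IsNCMatching M) {e : Sym2 (Fin n)} (he : e ∈ M) :
    ∃ v, e = s(v, pr hM v) := by
  induction e using Sym2.ind with
  | _ x y => exact ⟨x, by rw [← pr_spec hM he]⟩

/-- interval closure: the partner of a point strictly inside an edge is strictly inside -/
lemma int_mem (hM : IsNCMatching M) {p q r : Fin n} (hpq : s(p,q) ∈ M)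
    (h1 : (p:ℕ) < q) (hr1 : (p:ℕ) < r) (hr2 : (r:ℕ) < q) :
    (p:ℕ) < pr hM r ∧ (pr hM r : ℕ) < q := by
  set s := pr hM r with hs
  have hrs : s(r, s) ∈ M := pr_edge hM r
  by_contra hcon
  push_neg at hcon
  have hsp : (s:ℕ) ≠ p := by
    intro h
    have hsep : s = p := Fin.ext h
    rw [hsep] at hrs
    have := (hM.2.1 p).unique ⟨hrs, by simp⟩ ⟨hpq, by simp⟩
    rw [Sym2.eq_iff] at this
    have hv := congrArg Fin.val hsep
    rcases this with ⟨h1', h2'⟩ | ⟨h1', h2'⟩ <;>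
    · have := congrArg Fin.val h1'; have := congrArg Fin.val h2'; omega
  have hsq : (s:ℕ) ≠ q := by
    intro h
    have hsep : s = q := Fin.ext h
    rw [hsep, Sym2.eq_swap] at hrs
    have := (hM.2.1 q).unique ⟨hrs, by simp⟩ ⟨hpq, by simp⟩
    rw [Sym2.eq_iff] at this
    have hv := congrArg Fin.val hsep
    rcases this with ⟨h1', h2'⟩ | ⟨h1', h2'⟩ <;>
    · have := congrArg Fin.val h1'; have := congrArg Fin.val h2'; omega
  rcases Nat.lt_or_ge (s:ℕ) (p:ℕ) with hlt | hge
  · -- s < p < r < q : Cross s(s,r) s(p,q)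
    have : Cross s(s,r) s(p,q) := cross_intro hlt hr1 hr2
    rw [Sym2.eq_swap (a := s)] at this
    exact hM.2.2 _ hrs _ hpq this
  · have hgt : (q:ℕ) < s := by
      have := hcon (by omega)
      omega
    -- p < r < q < s : Cross s(p,q) s(r,s)
    exact hM.2.2 _ hpq _ hrs (cross_intro hr1 hr2 hgt)

lemma edge_parity (hM : IsNCMatching M) {a b : Fin n} (hab : s(a,b) ∈ M)
    (h : (a:ℕ) < b) : (a:ℕ) % 2 ≠ (b:ℕ) % 2 := by
  have hT : ∀ x ∈ Finset.Ioo a b, pr hM x ∈ Finset.Ioo a b := by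
    intro x hx
    rw [Finset.mem_Ioo] at hx ⊢
    rw [Fin.lt_def] at hx ⊢
    obtain ⟨h1, h2⟩ := hx
    exact ⟨(int_mem hM hab h h1 h2).1, (int_mem hM hab h h1 h2).2⟩
  have heven := even_card_of_invol (Finset.Ioo a b) (pr hM) hT
    (fun x _ => pr_invol hM x) (fun x _ => pr_ne hM x)
  rw [Fin.card_Ioo] at heven
  obtain ⟨c, hc⟩ := heven
  omega

end Matching
end RingProof
namespace RingProof
section EvenRing
variable {k : ℕ} {M : Finset (Sym2 (Fin (2*k)))}

def pe (i : Fin k) : Fin (2*k) := ⟨2*i.val, by have := i.isLt; omega⟩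
def po (i : Fin k) : Fin (2*k) := ⟨2*i.val+1, by have := i.isLt; omega⟩

@[simp] lemma pe_val (i : Fin k) : (pe i : ℕ) = 2*i.val := rfl
@[simp] lemma po_val (i : Fin k) : (po i : ℕ) = 2*i.val+1 := rfl

lemma pr_po_even (hM : IsNCMatching M) (i : Fin k) : (pr hM (po i)).val % 2 = 0 := by
  set w := pr hM (po i) with hw
  have hedge : s(po i, w) ∈ M := pr_edge hM (po i)
  have hne : (w : ℕ) ≠ (po i : ℕ) := fun h => pr_ne hM (po i) (Fin.ext h)
  rcases Nat.lt_or_ge (po i : ℕ) (w : ℕ) with h | h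
  · have := edge_parity hM hedge h
    simp only [po_val] at this ⊢
    omega
  · rw [Sym2.eq_swap] at hedge
    have := edge_parity hM hedge (by omega)
    simp only [po_val] at this ⊢
    omega

lemma pr_pe_odd (hM : IsNCMatching M) (j : Fin k) : (pr hM (pe j)).val % 2 = 1 := by
  set w := pr hM (pe j) with hw
  have hedge : s(pe j, w) ∈ M := pr_edge hM (pe j)
  have hne : (w : ℕ) ≠ (pe j : ℕ) := fun h => pr_ne hM (pe j) (Fin.ext h)
  rcases Nat.lt_or_ge (pe j : ℕ) (w : ℕ) with h | h
  · have := edge_parity hM hedge h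
    simp only [pe_val] at this ⊢
    omega
  · rw [Sym2.eq_swap] at hedge
    have := edge_parity hM hedge (by omega)
    simp only [pe_val] at this ⊢
    omega

noncomputable def fB (hM : IsNCMatching M) (i : Fin k) : Fin k :=
  ⟨(pr hM (po i)).val / 2, by have := (pr hM (po i)).isLt; omega⟩

noncomputable def gB (hM : IsNCMatching M) (j : Fin k) : Fin k :=
  ⟨(pr hM (pe j)).val / 2, by
    have := (pr hM (pe j)).isLt
    have := pr_pe_odd hM j
    omega⟩

lemma pe_fB (hM : IsNCMatching M) (i : Fin k) : pe (fB hM i) = pr hM (po i) := by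
  have := pr_po_even hM i
  apply Fin.ext
  simp only [pe_val, fB]
  omega

lemma po_gB (hM : IsNCMatching M) (j : Fin k) : po (gB hM j) = pr hM (pe j) := by
  have := pr_pe_odd hM j
  apply Fin.ext
  simp only [po_val, gB]
  omega

lemma edge_fB (hM : IsNCMatching M) (i : Fin k) : s(po i, pe (fB hM i)) ∈ M := by
  rw [pe_fB]; exact pr_edge hM (po i)

lemma gB_fB (hM : IsNCMatching M) : Function.LeftInverse (gB hM) (fB hM) := by
  intro i
  have h1 : po (gB hM (fB hM i)) = po i := by
    rw [po_gB, pe_fB, pr_invol]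
  have := congrArg Fin.val h1
  simp only [po_val] at this
  exact Fin.ext (by omega)

lemma fB_gB (hM : IsNCMatching M) : Function.RightInverse (gB hM) (fB hM) := by
  intro j
  have h1 : pe (fB hM (gB hM j)) = pe j := by
    rw [pe_fB, po_gB, pr_invol]
  have := congrArg Fin.val h1
  simp only [pe_val] at this
  exact Fin.ext (by omega)

noncomputable def πB (hM : IsNCMatching M) : Equiv.Perm (Fin k) :=
  ⟨fB hM, gB hM, gB_fB hM, fB_gB hM⟩

@[simp] lemma πB_apply (hM : IsNCMatching M) (i : Fin k) : πB hM i = fB hM i := rfl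

lemma fB_inj (hM : IsNCMatching M) {i j : Fin k} (h : fB hM i = fB hM j) : i = j := by
  have := congrArg (gB hM) h
  rwa [gB_fB hM, gB_fB hM] at this

lemma fB_ne (hM : IsNCMatching M) (hD : ∀ i : Fin k, s(pe i, po i) ∉ M) (i : Fin k) :
    fB hM i ≠ i := by
  intro h
  apply hD i
  have := edge_fB hM i
  rw [h, Sym2.eq_swap] at this
  exact this

/-- ascending closure -/
lemma cl_asc (hM : IsNCMatching M) {x j : Fin k} (hx : (x:ℕ) < fB hM x)
    (h1 : (x:ℕ) < j) (h2 : (j:ℕ) < fB hM x) :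
    (x:ℕ) < fB hM j ∧ (fB hM j:ℕ) < fB hM x := by
  have hedge := edge_fB hM x
  have hin := int_mem hM hedge (by simp only [po_val, pe_val]; omega)
    (r := po j) (by simp only [po_val]; omega) (by simp only [po_val, pe_val]; omega)
  rw [← pe_fB hM j] at hin
  simp only [po_val, pe_val] at hin
  omega

/-- descending inside closure -/
lemma cl_desc (hM : IsNCMatching M) {x j : Fin k} (hx : (fB hM x:ℕ) < x)
    (h1 : (fB hM x:ℕ) < j) (h2 : (j:ℕ) < x) (hne : fB hM j ≠ x) :
    (fB hM x:ℕ) < fB hM j ∧ (fB hM j:ℕ) < x := by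
  have hedge := edge_fB hM x
  rw [Sym2.eq_swap] at hedge
  have hin := int_mem hM hedge (by simp only [po_val, pe_val]; omega)
    (r := po j) (by simp only [po_val, pe_val]; omega) (by simp only [po_val]; omega)
  rw [← pe_fB hM j] at hin
  simp only [po_val, pe_val] at hin
  have : (fB hM j : ℕ) ≠ x := fun h => hne (Fin.ext h)
  omega

/-- descending outside closure -/
lemma cl_out (hM : IsNCMatching M) {x j : Fin k} (hx : (fB hM x:ℕ) < x)
    (h1 : (j:ℕ) < fB hM x ∨ (x:ℕ) < j) :
    (fB hM j:ℕ) < fB hM x ∨ (x:ℕ) < fB hM j := by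
  by_contra hcon
  push_neg at hcon
  obtain ⟨hc1, hc2⟩ := hcon
  -- then fB x ≤ fB j ≤ x, so pe (fB j) is strictly inside the chord interval
  have hne1 : fB hM j ≠ fB hM x := by
    intro h
    have := fB_inj hM h
    subst this
    omega
  have hne1' : (fB hM j : ℕ) ≠ fB hM x := fun h => hne1 (Fin.ext h)
  have hedge := edge_fB hM x
  rw [Sym2.eq_swap] at hedge
  have hin := int_mem hM hedge (by simp only [po_val, pe_val]; omega)
    (r := pe (fB hM j)) (by simp only [po_val, pe_val]; omega)
    (by simp only [po_val, pe_val]; omega)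
  have hpr : pr hM (pe (fB hM j)) = po j := by
    rw [pe_fB hM j, pr_invol]
  rw [hpr] at hin
  simp only [po_val, pe_val] at hin
  omega
end EvenRing
end RingProof
namespace RingProof
section Cycles
variable {k : ℕ} {M : Finset (Sym2 (Fin (2*k)))}

lemma iterate_closed (hM : IsNCMatching M) {S : Fin k → Prop}
    (hS : ∀ j, S j → S (fB hM j)) {a b : Fin k}
    (hab : (πB hM).SameCycle a b) (ha : S a) : S b := by
  obtain ⟨m, -, -, hm⟩ := Equiv.Perm.SameCycle.exists_pow_eq (πB hM) hab
  have key : ∀ m : ℕ, S (((πB hM)^m) a) := by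
    intro m
    induction m with
    | zero => simpa using ha
    | succ t ih =>
      rw [pow_succ', Equiv.Perm.mul_apply]
      exact hS _ ih
  rw [← hm]
  exact key m

lemma sc_pow (hM : IsNCMatching M) (a : Fin k) (t : ℕ) :
    (πB hM).SameCycle a (((πB hM)^t) a) := ⟨(t:ℤ), by rw [zpow_natCast]⟩

lemma sc_f (hM : IsNCMatching M) (z : Fin k) : (πB hM).SameCycle z (fB hM z) :=
  ⟨1, by simp⟩

lemma mono_asc (hM : IsNCMatching M) {x j : Fin k} (hx : (x:ℕ) < fB hM x)
    (hj : (πB hM).SameCycle x j) : ¬((x:ℕ) < j ∧ (j:ℕ) < fB hM x) := by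
  rintro ⟨h1, h2⟩
  have := iterate_closed hM (S := fun z => (x:ℕ) < z ∧ (z:ℕ) < fB hM x)
    (fun z hz => cl_asc hM hx hz.1 hz.2) hj.symm ⟨h1, h2⟩
  omega

lemma mono_desc (hM : IsNCMatching M) {x j : Fin k} (hx : (fB hM x:ℕ) < x)
    (hj : (πB hM).SameCycle x j) : (fB hM x:ℕ) ≤ j ∧ (j:ℕ) ≤ x := by
  by_contra hcon
  have hd : (j:ℕ) < fB hM x ∨ (x:ℕ) < j := by omega
  have := iterate_closed hM (S := fun z => (z:ℕ) < fB hM x ∨ (x:ℕ) < z)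
    (fun z hz => cl_out hM hx hz) hj.symm hd
  omega

lemma exists_jump (hM : IsNCMatching M) {a a' c : Fin k}
    (h : (πB hM).SameCycle a a') (hc : ¬ (πB hM).SameCycle a c)
    (h1 : (a:ℕ) < c) (h2 : (c:ℕ) < a') :
    ∃ x, (πB hM).SameCycle a x ∧
      (((x:ℕ) < c ∧ (c:ℕ) < fB hM x) ∨ ((fB hM x:ℕ) < c ∧ (c:ℕ) < x)) := by
  obtain ⟨m, -, -, hm⟩ := Equiv.Perm.SameCycle.exists_pow_eq (πB hM) h
  clear h
  induction m generalizing a' with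
  | zero => simp at hm; subst hm; omega
  | succ t ih =>
    set y := ((πB hM)^t) a with hy
    have hay : (πB hM).SameCycle a y := sc_pow hM a t
    have hyc : (y:ℕ) ≠ c := fun hh => hc (Fin.ext hh ▸ hay)
    have hstep : fB hM y = a' := by
      rw [← hm, pow_succ', Equiv.Perm.mul_apply]
      rfl
    rcases Nat.lt_or_ge (y:ℕ) (c:ℕ) with hlt | hge
    · exact ⟨y, hay, Or.inl ⟨hlt, by rw [hstep]; exact h2⟩⟩
    · have hgt : (c:ℕ) < y := by omega
      exact ih hgt rfl

lemma cycles_noncross (hM : IsNCMatching M) {a b a' b' : Fin k}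
    (haa : (πB hM).SameCycle a a') (hbb : (πB hM).SameCycle b b')
    (hab : ¬ (πB hM).SameCycle a b)
    (o1 : (a:ℕ) < b) (o2 : (b:ℕ) < a') (o3 : (a':ℕ) < b') : False := by
  obtain ⟨x, hax, hx⟩ := exists_jump hM haa hab o1 o2
  have hxb : ¬ (πB hM).SameCycle x b := fun h => hab (hax.trans h)
  rcases hx with ⟨hx1, hx2⟩ | ⟨hx1, hx2⟩
  · -- ascending chord over b
    have hasc : (x:ℕ) < fB hM x := lt_trans hx1 hx2
    have hS : ∀ z : Fin k, (((x:ℕ) < z ∧ (z:ℕ) < fB hM x) ∧ ¬ (πB hM).SameCycle x z) →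
        (((x:ℕ) < fB hM z ∧ (fB hM z:ℕ) < fB hM x) ∧ ¬ (πB hM).SameCycle x (fB hM z)) := by
      rintro z ⟨⟨hz1, hz2⟩, hz3⟩
      refine ⟨cl_asc hM hasc hz1 hz2, fun h => hz3 ?_⟩
      rwa [show fB hM z = (πB hM) z from rfl, Equiv.Perm.sameCycle_apply_right] at h
    have hb' := iterate_closed hM hS hbb ⟨⟨hx1, hx2⟩, hxb⟩
    exact mono_asc hM hasc (hax.symm.trans haa) ⟨by omega, by omega⟩
  · -- descending chord over b
    have hS : ∀ z : Fin k, (((fB hM x:ℕ) < z ∧ (z:ℕ) < x) ∧ ¬ (πB hM).SameCycle x z) →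
        (((fB hM x:ℕ) < fB hM z ∧ (fB hM z:ℕ) < x) ∧ ¬ (πB hM).SameCycle x (fB hM z)) := by
      rintro z ⟨⟨hz1, hz2⟩, hz3⟩
      have hdesc : (fB hM x:ℕ) < x := by omega
      have hne : fB hM z ≠ x := fun h => hz3 (h ▸ (sc_f hM z)).symm
      refine ⟨cl_desc hM hdesc hz1 hz2 hne, fun h => hz3 ?_⟩
      rwa [show fB hM z = (πB hM) z from rfl, Equiv.Perm.sameCycle_apply_right] at h
    have hbS : ((fB hM x:ℕ) < b ∧ (b:ℕ) < x) ∧ ¬ (πB hM).SameCycle x b := ⟨⟨hx1, hx2⟩, hxb⟩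
    have hb'S := iterate_closed hM hS hbb hbS
    have hba' : ¬ (πB hM).SameCycle b a' := fun h => hab (haa.trans h.symm)
    obtain ⟨y, hby, hy⟩ := exists_jump hM hbb hba' o2 o3
    have hyS := iterate_closed hM hS hby hbS
    have hya : ¬ (πB hM).SameCycle y a' := fun h => hab ((haa.trans h.symm).trans hby.symm)
    rcases hy with ⟨hy1, hy2⟩ | ⟨hy1, hy2⟩
    · -- ascending chord of B over a'
      have hasc : (y:ℕ) < fB hM y := lt_trans hy1 hy2
      have hT : ∀ z : Fin k, (((y:ℕ) < z ∧ (z:ℕ) < fB hM y) ∧ ¬ (πB hM).SameCycle y z) →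
          (((y:ℕ) < fB hM z ∧ (fB hM z:ℕ) < fB hM y) ∧ ¬ (πB hM).SameCycle y (fB hM z)) := by
        rintro z ⟨⟨hz1, hz2⟩, hz3⟩
        refine ⟨cl_asc hM hasc hz1 hz2, fun h => hz3 ?_⟩
        rwa [show fB hM z = (πB hM) z from rfl, Equiv.Perm.sameCycle_apply_right] at h
      have ha'T : (((y:ℕ) < a' ∧ (a':ℕ) < fB hM y) ∧ ¬ (πB hM).SameCycle y a') :=
        ⟨⟨hy1, hy2⟩, hya⟩
      have hxT := iterate_closed hM hT (haa.symm.trans hax) ha'T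
      have hfxT := iterate_closed hM hT ((haa.symm.trans hax).trans (sc_f hM x)) ha'T
      -- fB x ∈ (y, f y) so y < fB x, but y ∈ S gives fB x < y
      obtain ⟨⟨hh1, -⟩, -⟩ := hfxT
      obtain ⟨⟨-, -⟩, -⟩ := hxT
      obtain ⟨⟨hyS1, -⟩, -⟩ := hyS
      omega
    · -- descending chord of B over a'
      have hT : ∀ z : Fin k, (((fB hM y:ℕ) < z ∧ (z:ℕ) < y) ∧ ¬ (πB hM).SameCycle y z) →
          (((fB hM y:ℕ) < fB hM z ∧ (fB hM z:ℕ) < y) ∧ ¬ (πB hM).SameCycle y (fB hM z)) := by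
        rintro z ⟨⟨hz1, hz2⟩, hz3⟩
        have hdesc : (fB hM y:ℕ) < y := by omega
        have hne : fB hM z ≠ y := fun h => hz3 (h ▸ (sc_f hM z)).symm
        refine ⟨cl_desc hM hdesc hz1 hz2 hne, fun h => hz3 ?_⟩
        rwa [show fB hM z = (πB hM) z from rfl, Equiv.Perm.sameCycle_apply_right] at h
      have hxT := iterate_closed hM hT (haa.symm.trans hax) ⟨⟨hy1, hy2⟩, hya⟩
      obtain ⟨⟨-, hh2⟩, -⟩ := hxT
      obtain ⟨⟨-, hyS2⟩, -⟩ := hyS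
      omega

end Cycles
end RingProof
namespace RingProof
section PartOf
variable {k : ℕ} {M : Finset (Sym2 (Fin (2*k)))}

open Classical in
noncomputable def cyclePart (hM : IsNCMatching M) (i : Fin k) : Finset (Fin k) :=
  Finset.univ.filter (fun j => (πB hM).SameCycle i j)

lemma mem_cyclePart {hM : IsNCMatching M} {i j : Fin k} :
    j ∈ cyclePart hM i ↔ (πB hM).SameCycle i j := by
  classical
  simp [cyclePart]

lemma cyclePart_eq_of_sc {hM : IsNCMatching M} {i j : Fin k}
    (h : (πB hM).SameCycle i j) : cyclePart hM i = cyclePart hM j := by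
  ext z
  rw [mem_cyclePart, mem_cyclePart]
  exact ⟨fun hz => h.symm.trans hz, fun hz => h.trans hz⟩

open Classical in
noncomputable def partOf (hM : IsNCMatching M) : Finset (Finset (Fin k)) :=
  Finset.univ.image (cyclePart hM)

lemma partOf_valid (hM : IsNCMatching M) (hD : ∀ i : Fin k, s(pe i, po i) ∉ M) :
    IsNCPartitionNoSingletons (partOf hM) := by
  classical
  refine ⟨?_, ?_, ?_⟩
  · intro A hA
    obtain ⟨i, -, rfl⟩ := Finset.mem_image.1 hA
    rw [show (2:ℕ) = 1 + 1 from rfl, Nat.add_comm]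
    apply Nat.succ_le_of_lt
    rw [Finset.one_lt_card]
    exact ⟨i, mem_cyclePart.2 (Equiv.Perm.SameCycle.refl _ _), fB hM i,
      mem_cyclePart.2 (sc_f hM i), fun h => fB_ne hM hD i h.symm⟩
  · intro v
    refine ⟨cyclePart hM v, ⟨Finset.mem_image.2 ⟨v, Finset.mem_univ v, rfl⟩,
      mem_cyclePart.2 (Equiv.Perm.SameCycle.refl _ _)⟩, ?_⟩
    rintro B ⟨hB, hvB⟩
    obtain ⟨j, -, rfl⟩ := Finset.mem_image.1 hB
    exact cyclePart_eq_of_sc (mem_cyclePart.1 hvB)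
  · rintro A hA B hB hAB ⟨a, ha, a', ha', b, hb, b', hb', o1, o2, o3⟩
    obtain ⟨i, -, rfl⟩ := Finset.mem_image.1 hA
    obtain ⟨j, -, rfl⟩ := Finset.mem_image.1 hB
    rw [mem_cyclePart] at ha ha' hb hb'
    rw [Fin.lt_def] at o1 o2 o3
    refine cycles_noncross hM (ha.symm.trans ha') (hb.symm.trans hb') ?_ o1 o2 o3
    intro h
    exact hAB (cyclePart_eq_of_sc (((ha.trans h).trans hb.symm)))

end PartOf

section Partition
variable {k : ℕ} {P : Finset (Finset (Fin k))}

noncomputable def partAt (hP : IsNCPartitionNoSingletons P) (i : Fin k) : Finset (Fin k) :=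
  Finset.choose (i ∈ ·) P (hP.2.1 i)

lemma partAt_mem (hP : IsNCPartitionNoSingletons P) (i : Fin k) : partAt hP i ∈ P :=
  Finset.choose_mem _ _ _

lemma mem_partAt (hP : IsNCPartitionNoSingletons P) (i : Fin k) : i ∈ partAt hP i :=
  Finset.choose_property (i ∈ ·) _ _

lemma partAt_eq (hP : IsNCPartitionNoSingletons P) {A : Finset (Fin k)} {i : Fin k}
    (hA : A ∈ P) (hi : i ∈ A) : partAt hP i = A :=
  (hP.2.1 i).unique ⟨partAt_mem hP i, mem_partAt hP i⟩ ⟨hA, hi⟩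

lemma partAt_eq_of_mem (hP : IsNCPartitionNoSingletons P) {i j : Fin k}
    (h : j ∈ partAt hP i) : partAt hP j = partAt hP i :=
  partAt_eq hP (partAt_mem hP i) h

noncomputable def nxt (hP : IsNCPartitionNoSingletons P) (i : Fin k) : Fin k :=
  if h : ((partAt hP i).filter (fun j : Fin k => (i:ℕ) < (j:ℕ))).Nonempty then
    ((partAt hP i).filter (fun j : Fin k => (i:ℕ) < (j:ℕ))).min' h
  else (partAt hP i).min' ⟨i, mem_partAt hP i⟩

lemma nxt_mem (hP : IsNCPartitionNoSingletons P) (i : Fin k) : nxt hP i ∈ partAt hP i := by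
  unfold nxt
  split_ifs with h
  · exact Finset.mem_of_mem_filter _ (Finset.min'_mem _ h)
  · exact Finset.min'_mem _ _

lemma nxt_spec (hP : IsNCPartitionNoSingletons P) (i : Fin k) :
    (((i:ℕ) < nxt hP i) ∧ ∀ j ∈ partAt hP i, ¬((i:ℕ) < j ∧ (j:ℕ) < nxt hP i)) ∨
    (((nxt hP i:ℕ) < i) ∧ ∀ j ∈ partAt hP i, (nxt hP i:ℕ) ≤ j ∧ (j:ℕ) ≤ i) := by
  unfold nxt
  split_ifs with h
  · left
    constructor
    · exact (Finset.mem_filter.1 (Finset.min'_mem _ h)).2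
    · rintro j hj ⟨hj1, hj2⟩
      have : ((partAt hP i).filter (fun j : Fin k => (i:ℕ) < (j:ℕ))).min' h ≤ j :=
        Finset.min'_le _ _ (Finset.mem_filter.2 ⟨hj, hj1⟩)
      rw [Fin.le_def] at this
      omega
  · right
    have hmax : ∀ j ∈ partAt hP i, (j:ℕ) ≤ i := by
      intro j hj
      by_contra hc
      exact h ⟨j, Finset.mem_filter.2 ⟨hj, by omega⟩⟩
    have hmin : ∀ j ∈ partAt hP i, ((partAt hP i).min' ⟨i, mem_partAt hP i⟩ : ℕ) ≤ j := by
      intro j hj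
      have := Finset.min'_le _ _ hj
      rwa [Fin.le_def] at this
    refine ⟨?_, fun j hj => ⟨hmin j hj, hmax j hj⟩⟩
    -- the part has ≥ 2 elements and i is its max, so min < i
    have hcard := hP.1 _ (partAt_mem hP i)
    have hcard' : 1 < (partAt hP i).card := by omega
    obtain ⟨x, hx, y, hy, hxy⟩ := Finset.one_lt_card.1 hcard'
    have hne : ∃ z ∈ partAt hP i, z ≠ i := by
      rcases eq_or_ne x i with rfl | hxi
      · exact ⟨y, hy, Ne.symm hxy⟩
      · exact ⟨x, hx, hxi⟩
    obtain ⟨z, hz, hzi⟩ := hne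
    have h1 := hmin z hz
    have h2 := hmax z hz
    have h3 := hmin i (mem_partAt hP i)
    have : (z:ℕ) ≠ (i:ℕ) := fun hh => hzi (Fin.ext hh)
    omega

lemma nxt_ne (hP : IsNCPartitionNoSingletons P) (i : Fin k) : nxt hP i ≠ i := by
  rcases nxt_spec hP i with ⟨h1, -⟩ | ⟨h1, -⟩ <;>
    exact fun h => by rw [h] at h1; omega

lemma nxt_inj (hP : IsNCPartitionNoSingletons P) {i i' : Fin k}
    (h : nxt hP i = nxt hP i') : i = i' := by
  have hmem : nxt hP i ∈ partAt hP i := nxt_mem hP i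
  have hmem' : nxt hP i ∈ partAt hP i' := h ▸ nxt_mem hP i'
  have hAA : partAt hP i = partAt hP i' := by
    rw [← partAt_eq_of_mem hP hmem, ← partAt_eq_of_mem hP hmem']
  rcases nxt_spec hP i with ⟨h1, h2⟩ | ⟨h1, h2⟩ <;>
    rcases nxt_spec hP i' with ⟨h1', h2'⟩ | ⟨h1', h2'⟩
  · -- both ascending
    have hi' : (i':Fin k) ∈ partAt hP i := hAA ▸ mem_partAt hP i'
    have hi : (i:Fin k) ∈ partAt hP i' := hAA ▸ mem_partAt hP i
    rcases Nat.lt_trichotomy (i:ℕ) (i':ℕ) with hlt | heq | hgt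
    · exact absurd ⟨hlt, by rw [← h] at h1'; omega⟩ (h2 _ hi')
    · exact Fin.ext heq
    · exact absurd ⟨hgt, by rw [h] at h1; omega⟩ (h2' _ hi)
  · -- i ascending, i' descending : nxt i' is min of part, so nxt i ≤ i, contra
    have hi : (i:Fin k) ∈ partAt hP i' := hAA ▸ mem_partAt hP i
    have := (h2' _ hi).1
    rw [← h] at this
    omega
  · have hi' : (i':Fin k) ∈ partAt hP i := hAA ▸ mem_partAt hP i'
    have := (h2 _ hi').1
    rw [h] at this
    omega
  · -- both descending: both are max
    have hi' : (i':Fin k) ∈ partAt hP i := hAA ▸ mem_partAt hP i'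
    have hi : (i:Fin k) ∈ partAt hP i' := hAA ▸ mem_partAt hP i
    have := (h2 _ hi').2
    have := (h2' _ hi).2
    exact Fin.ext (by omega)

lemma nxt_maps (hP : IsNCPartitionNoSingletons P) {i j : Fin k} (h : j ∈ partAt hP i) :
    nxt hP j ∈ partAt hP i := by
  rw [← partAt_eq_of_mem hP h]
  exact nxt_mem hP j

lemma nxt_eq_of (hP : IsNCPartitionNoSingletons P) {x y : Fin k}
    (hx : x ∈ partAt hP y) (hlt : (y:ℕ) < x)
    (hbet : ∀ z ∈ partAt hP y, ¬((y:ℕ) < z ∧ (z:ℕ) < x)) : nxt hP y = x := by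
  rcases nxt_spec hP y with ⟨h1, h2⟩ | ⟨h1, h2⟩
  · have hm := nxt_mem hP y
    rcases Nat.lt_trichotomy (nxt hP y : ℕ) (x:ℕ) with hlt' | heq | hgt
    · exact absurd ⟨h1, hlt'⟩ (hbet _ hm)
    · exact Fin.ext heq
    · exact absurd ⟨hlt, hgt⟩ (h2 _ hx)
  · have := (h2 _ hx).2
    omega

lemma nxt_eq_min (hP : IsNCPartitionNoSingletons P) {x y : Fin k}
    (hmax : ∀ z ∈ partAt hP y, (z:ℕ) ≤ y) (hx : x ∈ partAt hP y)
    (hmin : ∀ z ∈ partAt hP y, (x:ℕ) ≤ z) (hne : x ≠ y) : nxt hP y = x := by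
  rcases nxt_spec hP y with ⟨h1, -⟩ | ⟨-, h2⟩
  · have := hmax _ (nxt_mem hP y)
    omega
  · have ha := (h2 _ hx).1
    have hb := hmin _ (nxt_mem hP y)
    exact Fin.ext (by omega)

end Partition
end RingProof
namespace RingProof

lemma noCross_left {n : ℕ} {a b : Fin n} (h : (b:ℕ) = (a:ℕ)+1 ∨ ((a:ℕ) = 0 ∧ (b:ℕ) = n-1))
    (f : Sym2 (Fin n)) : ¬ Cross s(a,b) f := by
  rintro ⟨x, y, z, w, he, -, h1, h2, h3⟩
  rw [Sym2.eq_iff] at he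
  rw [Fin.lt_def] at h1 h2 h3
  have hw := w.isLt
  rcases he with ⟨ha, hb⟩ | ⟨ha, hb⟩ <;>
    · have := congrArg Fin.val ha
      have := congrArg Fin.val hb
      omega

lemma noCross_right {n : ℕ} {a b : Fin n} (h : (b:ℕ) = (a:ℕ)+1 ∨ ((a:ℕ) = 0 ∧ (b:ℕ) = n-1))
    (f : Sym2 (Fin n)) : ¬ Cross f s(a,b) := by
  rintro ⟨x, y, z, w, -, he, h1, h2, h3⟩
  rw [Sym2.eq_iff] at he
  rw [Fin.lt_def] at h1 h2 h3
  have hx := x.isLt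
  have hy := y.isLt
  rcases he with ⟨ha, hb⟩ | ⟨ha, hb⟩ <;>
    · have := congrArg Fin.val ha
      have := congrArg Fin.val hb
      omega

section Psi
variable {k : ℕ} {P : Finset (Finset (Fin k))}

def evenRing (k : ℕ) : Finset (Sym2 (Fin (2*k))) :=
  Finset.univ.image (fun i : Fin k => s(pe i, po i))

noncomputable def ψm (hP : IsNCPartitionNoSingletons P) : Finset (Sym2 (Fin (2*k))) :=
  Finset.univ.image (fun i : Fin k => s(po i, pe (nxt hP i)))

lemma ψm_ncMatching (hP : IsNCPartitionNoSingletons P) : IsNCMatching (ψm hP) := by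
  refine ⟨?_, ?_, ?_⟩
  · rintro e he
    obtain ⟨i, -, rfl⟩ := Finset.mem_image.1 he
    rw [Sym2.isDiag_iff_proj_eq]
    intro hh
    have := congrArg Fin.val hh
    simp only [po_val, pe_val] at this
    omega
  · intro v
    rcases Nat.even_or_odd (v:ℕ) with ⟨m, hm⟩ | ⟨m, hm⟩
    · -- v = pe j for j = m
      have hmk : m < k := by have := v.isLt; omega
      obtain ⟨i, hi⟩ : ∃ i, nxt hP i = ⟨m, hmk⟩ :=
        Finite.surjective_of_injective (fun a b h => nxt_inj hP h) ⟨m, hmk⟩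
      have hv : v = pe (nxt hP i) := by
        apply Fin.ext
        rw [hi]
        show (v:ℕ) = 2*m
        omega
      refine ⟨s(po i, pe (nxt hP i)), ⟨Finset.mem_image.2 ⟨i, Finset.mem_univ i, rfl⟩,
        by rw [hv]; simp⟩, ?_⟩
      rintro e ⟨he, hve⟩
      obtain ⟨i', -, rfl⟩ := Finset.mem_image.1 he
      rw [Sym2.mem_iff] at hve
      rcases hve with hh | hh
      · exfalso
        have := congrArg Fin.val hh
        simp only [po_val] at this
        omega
      · have hval : (v:ℕ) = 2 * (nxt hP i' : ℕ) := congrArg Fin.val hh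
        have h2 : (nxt hP i : ℕ) = m := congrArg Fin.val hi
        have : nxt hP i' = nxt hP i := Fin.ext (by omega)
        rw [nxt_inj hP this]
    · -- v = po m
      have hmk : m < k := by have := v.isLt; omega
      have hv : v = po ⟨m, hmk⟩ := Fin.ext (by show (v:ℕ) = 2*m+1; omega)
      refine ⟨s(po ⟨m, hmk⟩, pe (nxt hP ⟨m, hmk⟩)),
        ⟨Finset.mem_image.2 ⟨_, Finset.mem_univ _, rfl⟩, by rw [hv]; simp⟩, ?_⟩
      rintro e ⟨he, hve⟩
      obtain ⟨i', -, rfl⟩ := Finset.mem_image.1 he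
      rw [Sym2.mem_iff] at hve
      rcases hve with hh | hh
      · have h1 : (v:ℕ) = 2*(i':ℕ)+1 := congrArg Fin.val hh
        have : i' = (⟨m, hmk⟩ : Fin k) := Fin.ext (by show (i':ℕ) = m; omega)
        rw [this]
      · exfalso
        have := congrArg Fin.val hh
        simp only [pe_val] at this
        omega
  · -- non-crossing
    intro e he f hf
    obtain ⟨i, -, rfl⟩ := Finset.mem_image.1 he
    obtain ⟨j, -, rfl⟩ := Finset.mem_image.1 hf
    intro hcross
    have hc := cross_cases hcross
    simp only [po_val, pe_val] at hc
    -- the four patterns in terms of blocks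
    have hiA := mem_partAt hP i
    have hjA := mem_partAt hP j
    have hni := nxt_mem hP i
    have hnj := nxt_mem hP j
    rcases eq_or_ne (partAt hP i) (partAt hP j) with hAB | hAB
    · -- same part
      have hjA' : (j:Fin k) ∈ partAt hP i := hAB ▸ hjA
      have hnj' : nxt hP j ∈ partAt hP i := hAB ▸ hnj
      rcases nxt_spec hP i with ⟨h1, h2⟩ | ⟨h1, h2⟩
      · rcases hc with ⟨c1,c2,c3⟩ | ⟨c1,c2,c3⟩ | ⟨c1,c2,c3⟩ | ⟨c1,c2,c3⟩
        · exact h2 _ hjA' ⟨by omega, by omega⟩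
        · exact h2 _ hnj' ⟨by omega, by omega⟩
        · omega
        · omega
      · have ha := h2 _ hjA'
        have hb := h2 _ hnj'
        rcases hc with ⟨c1,c2,c3⟩ | ⟨c1,c2,c3⟩ | ⟨c1,c2,c3⟩ | ⟨c1,c2,c3⟩ <;> omega
    · -- different parts: PartCross
      have hdisj : ∀ x : Fin k, x ∈ partAt hP i → x ∈ partAt hP j → False := by
        intro x hxi hxj
        exact hAB (by rw [← partAt_eq_of_mem hP hxi, partAt_eq_of_mem hP hxj])
      have d1 : (i:ℕ) ≠ (j:ℕ) := fun hh => hdisj i hiA (Fin.ext hh ▸ hjA)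
      have d2 : (i:ℕ) ≠ (nxt hP j : ℕ) := fun hh => hdisj i hiA (Fin.ext hh ▸ hnj)
      have d3 : (nxt hP i:ℕ) ≠ (j:ℕ) := fun hh => hdisj _ hni (Fin.ext hh ▸ hjA)
      have d4 : (nxt hP i:ℕ) ≠ (nxt hP j:ℕ) := fun hh => hdisj _ hni (Fin.ext hh ▸ hnj)
      apply hP.2.2 _ (partAt_mem hP i) _ (partAt_mem hP j) hAB
      rcases hc with ⟨c1,c2,c3⟩ | ⟨c1,c2,c3⟩ | ⟨c1,c2,c3⟩ | ⟨c1,c2,c3⟩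
      · exact ⟨i, hiA, nxt hP i, hni, j, hjA, nxt hP j, hnj,
          Fin.lt_def.2 (by omega), Fin.lt_def.2 (by omega), Fin.lt_def.2 (by omega)⟩
      · exact ⟨i, hiA, nxt hP i, hni, nxt hP j, hnj, j, hjA,
          Fin.lt_def.2 (by omega), Fin.lt_def.2 (by omega), Fin.lt_def.2 (by omega)⟩
      · exact ⟨nxt hP i, hni, i, hiA, j, hjA, nxt hP j, hnj,
          Fin.lt_def.2 (by omega), Fin.lt_def.2 (by omega), Fin.lt_def.2 (by omega)⟩
      · exact ⟨nxt hP i, hni, i, hiA, nxt hP j, hnj, j, hjA,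
          Fin.lt_def.2 (by omega), Fin.lt_def.2 (by omega), Fin.lt_def.2 (by omega)⟩

lemma ψm_no_ring_edge (hP : IsNCPartitionNoSingletons P) (i : Fin k) :
    s(pe i, po i) ∉ ψm hP := by
  intro h
  obtain ⟨j, -, hj⟩ := Finset.mem_image.1 h
  rw [Sym2.eq_iff] at hj
  rcases hj with ⟨h1, h2⟩ | ⟨h1, h2⟩
  · have := congrArg Fin.val h1
    simp only [po_val, pe_val] at this
    omega
  · -- po j = po i and pe (nxt j) = pe i ⇒ nxt i = i
    have hji : j = i := by
      apply Fin.ext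
      have := congrArg Fin.val h1
      simp only [po_val] at this
      omega
    have hni : nxt hP j = i := by
      apply Fin.ext
      have := congrArg Fin.val h2
      simp only [pe_val] at this
      omega
    rw [hji] at hni
    exact nxt_ne hP i hni

lemma mem_evenRing {k : ℕ} {e : Sym2 (Fin (2*k))} :
    e ∈ evenRing k ↔ ∃ i : Fin k, e = s(pe i, po i) := by
  constructor
  · intro h
    obtain ⟨i, -, hi⟩ := Finset.mem_image.1 h
    exact ⟨i, hi.symm⟩
  · rintro ⟨i, rfl⟩
    exact Finset.mem_image.2 ⟨i, Finset.mem_univ i, rfl⟩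

lemma disjCompat_evenRing_iff {k : ℕ} {X : Finset (Sym2 (Fin (2*k)))} :
    DisjCompat (evenRing k) X ↔ ∀ i : Fin k, s(pe i, po i) ∉ X := by
  constructor
  · intro h i
    exact h.1 _ (mem_evenRing.2 ⟨i, rfl⟩)
  · intro h
    constructor
    · intro e he
      obtain ⟨i, rfl⟩ := mem_evenRing.1 he
      exact h i
    · intro e he f hf
      obtain ⟨i, rfl⟩ := mem_evenRing.1 he
      have : (po i : ℕ) = (pe i : ℕ) + 1 := by simp
      exact ⟨noCross_left (Or.inl this) f, noCross_right (Or.inl this) f⟩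

end Psi
end RingProof
namespace RingProof
section Bij
variable {k : ℕ}

noncomputable def πP {P : Finset (Finset (Fin k))} (hP : IsNCPartitionNoSingletons P) :
    Equiv.Perm (Fin k) :=
  Equiv.ofBijective (nxt hP) ⟨fun _ _ h => nxt_inj hP h,
    Finite.surjective_of_injective (fun _ _ h => nxt_inj hP h)⟩

@[simp] lemma πP_apply {P : Finset (Finset (Fin k))} (hP : IsNCPartitionNoSingletons P)
    (i : Fin k) : πP hP i = nxt hP i := rfl

lemma cycle_subset_part {P : Finset (Finset (Fin k))} (hP : IsNCPartitionNoSingletons P)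
    {i x : Fin k} (h : (πP hP).SameCycle i x) : x ∈ partAt hP i := by
  obtain ⟨m, -, -, hm⟩ := Equiv.Perm.SameCycle.exists_pow_eq (πP hP) h
  have key : ∀ m : ℕ, ((πP hP)^m) i ∈ partAt hP i := by
    intro m
    induction m with
    | zero => simpa using mem_partAt hP i
    | succ t ih =>
      rw [pow_succ', Equiv.Perm.mul_apply]
      exact nxt_maps hP ih
  rw [← hm]
  exact key m

lemma part_subset_cycle {P : Finset (Finset (Fin k))} (hP : IsNCPartitionNoSingletons P)
    {i x : Fin k} (h : x ∈ partAt hP i) : (πP hP).SameCycle i x := by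
  -- first: everything in the part is same-cycle with the min of the part
  have hne : (partAt hP i).Nonempty := ⟨i, mem_partAt hP i⟩
  set A := partAt hP i with hA
  have hmin : A.min' hne ∈ A := Finset.min'_mem _ _
  have key : ∀ t : ℕ, ∀ x ∈ A, (x:ℕ) = t → (πP hP).SameCycle (A.min' hne) x := by
    intro t
    induction t using Nat.strong_induction_on with
    | _ t ih =>
      intro x hx hxt
      rcases eq_or_ne x (A.min' hne) with rfl | hxm
      · exact Equiv.Perm.SameCycle.refl _ _
      · have hlt : (A.min' hne : ℕ) < x := by
          have h1 := Finset.min'_le A x hx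
          rw [Fin.le_def] at h1
          have : (x:ℕ) ≠ (A.min' hne : ℕ) := fun hh => hxm (Fin.ext hh)
          omega
        -- y := the largest element of A below x
        have hfne : ((A.filter (fun z : Fin k => (z:ℕ) < (x:ℕ)))).Nonempty :=
          ⟨A.min' hne, Finset.mem_filter.2 ⟨hmin, hlt⟩⟩
        set y := (A.filter (fun z : Fin k => (z:ℕ) < (x:ℕ))).max' hfne with hy
        have hyA : y ∈ A := Finset.mem_of_mem_filter _ (Finset.max'_mem _ hfne)
        have hyx : (y:ℕ) < x := (Finset.mem_filter.1 (Finset.max'_mem _ hfne)).2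
        have hnxty : nxt hP y = x := by
          have hpy : partAt hP y = A := by rw [hA]; exact partAt_eq_of_mem hP hyA
          apply nxt_eq_of hP (by rw [hpy]; exact hx) hyx
          intro z hz ⟨hz1, hz2⟩
          rw [hpy] at hz
          have : z ∈ A.filter (fun z : Fin k => (z:ℕ) < (x:ℕ)) :=
            Finset.mem_filter.2 ⟨hz, hz2⟩
          have := Finset.le_max' _ _ this
          rw [Fin.le_def] at this
          omega
        have hscy : (πP hP).SameCycle (A.min' hne) y := ih (y:ℕ) (by omega) y hyA rfl
        have : (πP hP).SameCycle (A.min' hne) (nxt hP y) := by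
          rw [show nxt hP y = (πP hP) y from rfl]
          exact Equiv.Perm.sameCycle_apply_right.2 hscy
        rwa [hnxty] at this
  have h1 := key (i:ℕ) i (mem_partAt hP i) rfl
  have h2 := key (x:ℕ) x h rfl
  exact h1.symm.trans h2

lemma parts_eq_of_nxt_eq {P Q : Finset (Finset (Fin k))} (hP : IsNCPartitionNoSingletons P)
    (hQ : IsNCPartitionNoSingletons Q) (h : ∀ i, nxt hP i = nxt hQ i) : P = Q := by
  have hπ : πP hP = πP hQ := by
    apply Equiv.ext
    intro i
    simp [h i]
  have hpart : ∀ i, partAt hP i = partAt hQ i := by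
    intro i
    ext x
    constructor
    · intro hx
      exact cycle_subset_part hQ (hπ ▸ part_subset_cycle hP hx)
    · intro hx
      exact cycle_subset_part hP (hπ ▸ part_subset_cycle hQ hx)
  ext A
  constructor
  · intro hA
    have hcard := hP.1 A hA
    have : A.Nonempty := Finset.card_pos.1 (by omega)
    obtain ⟨x, hx⟩ := this
    have : A = partAt hQ x := by rw [← hpart x, partAt_eq hP hA hx]
    rw [this]
    exact partAt_mem hQ x
  · intro hA
    have hcard := hQ.1 A hA
    have : A.Nonempty := Finset.card_pos.1 (by omega)
    obtain ⟨x, hx⟩ := this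
    have : A = partAt hP x := by rw [hpart x, partAt_eq hQ hA hx]
    rw [this]
    exact partAt_mem hP x

lemma nxt_eq_of_ψm_eq {P Q : Finset (Finset (Fin k))} (hP : IsNCPartitionNoSingletons P)
    (hQ : IsNCPartitionNoSingletons Q) (h : ψm hP = ψm hQ) (i : Fin k) :
    nxt hP i = nxt hQ i := by
  have : s(po i, pe (nxt hP i)) ∈ ψm hQ := by
    rw [← h]
    exact Finset.mem_image.2 ⟨i, Finset.mem_univ i, rfl⟩
  obtain ⟨j, -, hj⟩ := Finset.mem_image.1 this
  rw [Sym2.eq_iff] at hj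
  rcases hj with ⟨h1, h2⟩ | ⟨h1, h2⟩
  · have hji : j = i := by
      have := congrArg Fin.val h1
      simp only [po_val] at this
      exact Fin.ext (by omega)
    have h2' : pe (nxt hQ j) = pe (nxt hP i) := h2
    have := congrArg Fin.val h2'
    simp only [pe_val] at this
    rw [hji] at this
    exact (Fin.ext (by omega)).symm
  · exfalso
    have := congrArg Fin.val h1
    simp only [po_val, pe_val] at this
    omega

variable {M : Finset (Sym2 (Fin (2*k)))}

lemma partAt_partOf (hM : IsNCMatching M) (hD : ∀ i : Fin k, s(pe i, po i) ∉ M) (i : Fin k) :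
    partAt (partOf_valid hM hD) i = cyclePart hM i :=
  partAt_eq _ (Finset.mem_image.2 ⟨i, Finset.mem_univ i, rfl⟩)
    (mem_cyclePart.2 (Equiv.Perm.SameCycle.refl _ _))

lemma nxt_partOf_eq_fB (hM : IsNCMatching M) (hD : ∀ i : Fin k, s(pe i, po i) ∉ M)
    (i : Fin k) : nxt (partOf_valid hM hD) i = fB hM i := by
  have hpart := partAt_partOf hM hD i
  rcases Nat.lt_or_ge (i:ℕ) (fB hM i : ℕ) with h | h
  · refine nxt_eq_of _ ?_ h ?_
    · rw [hpart]
      exact mem_cyclePart.2 (sc_f hM i)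
    · intro z hz
      rw [hpart, mem_cyclePart] at hz
      exact mono_asc hM h hz
  · have hne := fB_ne hM hD i
    have hlt : (fB hM i : ℕ) < i := by
      have : (fB hM i : ℕ) ≠ (i:ℕ) := fun hh => hne (Fin.ext hh)
      omega
    apply nxt_eq_min
    · intro z hz
      rw [hpart, mem_cyclePart] at hz
      exact (mono_desc hM hlt hz).2
    · rw [hpart]
      exact mem_cyclePart.2 (sc_f hM i)
    · intro z hz
      rw [hpart, mem_cyclePart] at hz
      exact (mono_desc hM hlt hz).1
    · exact hne

lemma ψm_partOf (hM : IsNCMatching M) (hD : ∀ i : Fin k, s(pe i, po i) ∉ M) :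
    ψm (partOf_valid hM hD) = M := by
  ext e
  constructor
  · intro he
    obtain ⟨i, -, rfl⟩ := Finset.mem_image.1 he
    rw [nxt_partOf_eq_fB hM hD]
    exact edge_fB hM i
  · intro he
    obtain ⟨v, rfl⟩ := edge_form hM he
    rcases Nat.even_or_odd (v:ℕ) with ⟨m, hm⟩ | ⟨m, hm⟩
    · -- v = pe j
      have hmk : m < k := by have := v.isLt; omega
      have hv : v = pe ⟨m, hmk⟩ := Fin.ext (by show (v:ℕ) = 2*m; omega)
      set j : Fin k := ⟨m, hmk⟩
      have hpr : pr hM v = po (gB hM j) := by rw [hv, po_gB]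
      have hswap : s(v, pr hM v) = s(po (gB hM j), pe (nxt (partOf_valid hM hD) (gB hM j))) := by
        rw [hpr, hv, Sym2.eq_swap, nxt_partOf_eq_fB hM hD, fB_gB hM j]
      rw [hswap]
      exact Finset.mem_image.2 ⟨gB hM j, Finset.mem_univ _, rfl⟩
    · -- v = po i
      have hmk : m < k := by have := v.isLt; omega
      have hv : v = po ⟨m, hmk⟩ := Fin.ext (by show (v:ℕ) = 2*m+1; omega)
      have hpr : pr hM v = pe (fB hM ⟨m, hmk⟩) := by rw [hv, pe_fB]
      rw [hpr, hv, ← nxt_partOf_eq_fB hM hD]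
      exact Finset.mem_image.2 ⟨⟨m, hmk⟩, Finset.mem_univ _, rfl⟩

theorem card_even (k : ℕ) :
    Nat.card {M' : Finset (Sym2 (Fin (2*k))) //
        IsNCMatching M' ∧ DisjCompat (evenRing k) M'} =
      Nat.card {P : Finset (Finset (Fin k)) // IsNCPartitionNoSingletons P} := by
  symm
  apply Nat.card_eq_of_bijective
    (f := fun X : {P : Finset (Finset (Fin k)) // IsNCPartitionNoSingletons P} =>
      (⟨ψm X.2, ψm_ncMatching X.2, disjCompat_evenRing_iff.2 (ψm_no_ring_edge X.2)⟩ :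
        {M' : Finset (Sym2 (Fin (2*k))) // IsNCMatching M' ∧ DisjCompat (evenRing k) M'}))
  constructor
  · rintro ⟨P, hP⟩ ⟨Q, hQ⟩ h
    have hval : ψm hP = ψm hQ := congrArg Subtype.val h
    exact Subtype.ext (parts_eq_of_nxt_eq hP hQ (nxt_eq_of_ψm_eq hP hQ hval))
  · rintro ⟨M', hM', hDC⟩
    have hD := disjCompat_evenRing_iff.1 hDC
    exact ⟨⟨partOf hM', partOf_valid hM' hD⟩, Subtype.ext (ψm_partOf hM' hD)⟩

end Bij
end RingProof
namespace RingProof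
section Classify
variable {k : ℕ}

def qe (i : Fin k) : Fin (2*k) :=
  ⟨(2*i.val+2) % (2*k), Nat.mod_lt _ (by have := i.isLt; omega)⟩

def oddRing (k : ℕ) : Finset (Sym2 (Fin (2*k))) :=
  Finset.univ.image (fun i : Fin k => s(po i, qe i))

lemma qe_val (i : Fin k) : (qe i : ℕ) = (2*i.val+2) % (2*k) := rfl

lemma qe_val_of_lt {i : Fin k} (h : i.val + 1 < k) : (qe i : ℕ) = 2*i.val+2 := by
  rw [qe_val, Nat.mod_eq_of_lt (by omega)]

lemma qe_val_last {i : Fin k} (h : i.val + 1 = k) : (qe i : ℕ) = 0 := by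
  rw [qe_val, show 2*i.val+2 = 2*k by omega, Nat.mod_self]

lemma cyc_val {n : ℕ} (i : Fin n) (j : ℕ) : (cyc i j : ℕ) = (i.val + j) % n := rfl

lemma mem_oddRing {e : Sym2 (Fin (2*k))} :
    e ∈ oddRing k ↔ ∃ i : Fin k, e = s(po i, qe i) := by
  constructor
  · intro h
    obtain ⟨i, -, hi⟩ := Finset.mem_image.1 h
    exact ⟨i, hi.symm⟩
  · rintro ⟨i, rfl⟩
    exact Finset.mem_image.2 ⟨i, Finset.mem_univ i, rfl⟩

theorem ring_eq (hk : 2 ≤ k) {M : Finset (Sym2 (Fin (2*k)))} (hM : IsRing M) :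
    M = evenRing k ∨ M = oddRing k := by
  have hNC := hM.1
  have hk0 : 0 < 2*k := by omega
  have hvert : ∀ v : Fin (2*k), ∃ i : Fin (2*k),
      s(i, cyc i 1) ∈ M ∧ (v = i ∨ v = cyc i 1) := by
    intro v
    obtain ⟨e, ⟨heM, hve⟩, -⟩ := hNC.2.1 v
    obtain ⟨i, rfl⟩ := hM.2 e heM
    rw [Sym2.mem_iff] at hve
    exact ⟨i, heM, hve⟩
  -- Step A
  have stepA : s((⟨0, hk0⟩ : Fin (2*k)), (⟨1, by omega⟩ : Fin (2*k))) ∈ M →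
      M = evenRing k := by
    intro s0
    have key : ∀ t : ℕ, ∀ j : Fin k, j.val = t → s(pe j, po j) ∈ M := by
      intro t
      induction t with
      | zero =>
        intro j hj
        have h1 : pe j = ⟨0, hk0⟩ := Fin.ext (by show 2*j.val = 0; omega)
        have h2 : po j = ⟨1, by omega⟩ := Fin.ext (by show 2*j.val+1 = 1; omega)
        rw [h1, h2]; exact s0
      | succ t ih =>
        intro j hj
        have htk : t + 1 < k := by rw [← hj]; exact j.isLt
        have hprev := ih ⟨t, by omega⟩ rfl
        obtain ⟨i, hiM, hv⟩ := hvert (pe j)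
        rcases hv with hv | hv
        · -- pe j = i
          subst hv
          have hcv : (cyc (pe j) 1 : ℕ) = 2*t+3 := by
            show (2*j.val + 1) % (2*k) = 2*t+3
            rw [Nat.mod_eq_of_lt (by omega)]
            omega
          have hpo : po j = cyc (pe j) 1 := Fin.ext (by
            rw [hcv]; show 2*j.val+1 = 2*t+3; omega)
          rw [hpo]
          exact hiM
        · -- pe j = cyc i 1, so i = 2t+1 and we get a conflict
          exfalso
          have hival : (i:ℕ) = 2*t+1 := by
            have h1 := congrArg Fin.val hv
            rw [cyc_val] at h1
            have h2 : (pe j : ℕ) = 2*t+2 := by show 2*j.val = 2*t+2; omega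
            have := i.isLt
            rcases Nat.lt_or_ge (i.val+1) (2*k) with hc | hc
            · rw [Nat.mod_eq_of_lt hc] at h1; omega
            · have : i.val + 1 = 2*k := by omega
              rw [this, Nat.mod_self] at h1
              omega
          -- edge s(2t+1, 2t+2) ∈ M conflicts with s(2t, 2t+1) at vertex 2t+1
          have hpv : po (⟨t, by omega⟩ : Fin k) = i := Fin.ext (by
            show 2*t+1 = (i:ℕ); omega)
          have := (hNC.2.1 i).unique ⟨hiM, by simp⟩ ⟨hprev, by rw [← hpv]; simp⟩
          rw [Sym2.eq_iff] at this
          rcases this with ⟨h1, h2⟩ | ⟨h1, h2⟩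
          · have hval : (i:ℕ) = 2*t := congrArg Fin.val h1
            omega
          · have hb : ((i:ℕ)+1) % (2*k) = 2*t := congrArg Fin.val h2
            rw [Nat.mod_eq_of_lt (by omega)] at hb
            omega
    ext e
    constructor
    · intro he
      obtain ⟨i, rfl⟩ := hM.2 e he
      rcases Nat.even_or_odd (i:ℕ) with ⟨m, hm⟩ | ⟨m, hm⟩
      · have hmk : m < k := by have := i.isLt; omega
        have hr := key m ⟨m, hmk⟩ rfl
        have hiv : i = pe ⟨m, hmk⟩ := Fin.ext (by show (i:ℕ) = 2*m; omega)
        have := (hNC.2.1 i).unique ⟨he, by simp⟩ ⟨hr, by rw [hiv]; simp⟩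
        rw [this]
        exact mem_evenRing.2 ⟨_, rfl⟩
      · have hmk : m < k := by have := i.isLt; omega
        have hr := key m ⟨m, hmk⟩ rfl
        have hiv : i = po ⟨m, hmk⟩ := Fin.ext (by show (i:ℕ) = 2*m+1; omega)
        have := (hNC.2.1 i).unique ⟨he, by simp⟩ ⟨hr, by rw [hiv]; simp⟩
        rw [this]
        exact mem_evenRing.2 ⟨_, rfl⟩
    · intro he
      obtain ⟨i, rfl⟩ := mem_evenRing.1 he
      exact key i.val i rfl
  -- Step B
  have stepB : s((⟨1, by omega⟩ : Fin (2*k)), (⟨2, by omega⟩ : Fin (2*k))) ∈ M →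
      M = oddRing k := by
    intro s1
    have key : ∀ t : ℕ, ∀ j : Fin k, j.val = t → s(po j, qe j) ∈ M := by
      intro t
      induction t with
      | zero =>
        intro j hj
        have h1 : po j = ⟨1, by omega⟩ := Fin.ext (by show 2*j.val+1 = 1; omega)
        have h2 : qe j = ⟨2, by omega⟩ := Fin.ext (by
          show (qe j : ℕ) = 2
          rw [qe_val_of_lt (by omega)]; omega)
        rw [h1, h2]; exact s1
      | succ t ih =>
        intro j hj
        have htk : t + 1 < k := by rw [← hj]; exact j.isLt
        have hprev := ih ⟨t, by omega⟩ rfl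
        have hqprev : (qe (⟨t, by omega⟩ : Fin k) : ℕ) = 2*t+2 :=
          qe_val_of_lt (by show t+1 < k; omega)
        obtain ⟨i, hiM, hv⟩ := hvert (po j)
        rcases hv with hv | hv
        · -- po j = i
          subst hv
          have hqe : qe j = cyc (po j) 1 := by
            apply Fin.ext
            show (2*j.val+2) % (2*k) = ((2*j.val+1) + 1) % (2*k)
            congr 1
          rw [hqe]
          exact hiM
        · -- po j = cyc i 1 ⇒ i = 2t+2, conflict at vertex 2t+2
          exfalso
          have hival : (i:ℕ) = 2*t+2 := by
            have h1 := congrArg Fin.val hv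
            rw [cyc_val] at h1
            have h2 : (po j : ℕ) = 2*t+3 := by show 2*j.val+1 = 2*t+3; omega
            have := i.isLt
            rcases Nat.lt_or_ge (i.val+1) (2*k) with hc | hc
            · rw [Nat.mod_eq_of_lt hc] at h1; omega
            · have : i.val + 1 = 2*k := by omega
              rw [this, Nat.mod_self] at h1
              omega
          have hqv : qe (⟨t, by omega⟩ : Fin k) = i := Fin.ext (by rw [hival, hqprev])
          have := (hNC.2.1 i).unique ⟨hiM, by simp⟩ ⟨hprev, by rw [← hqv]; simp⟩
          rw [Sym2.eq_iff] at this
          rcases this with ⟨h1, h2⟩ | ⟨h1, h2⟩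
          · have hval : (i:ℕ) = 2*t+1 := congrArg Fin.val h1
            omega
          · have hb : ((i:ℕ)+1) % (2*k) = 2*t+1 := congrArg Fin.val h2
            rw [Nat.mod_eq_of_lt (by omega)] at hb
            omega
    ext e
    constructor
    · intro he
      obtain ⟨i, rfl⟩ := hM.2 e he
      rcases Nat.even_or_odd (i:ℕ) with ⟨m, hm⟩ | ⟨m, hm⟩
      · -- i even: i = qe j' for suitable j'
        rcases Nat.eq_zero_or_pos m with rfl | hm0
        · have hr := key (k-1) ⟨k-1, by omega⟩ rfl
          have hiv : i = qe ⟨k-1, by omega⟩ := Fin.ext (by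
            rw [qe_val_last (by show k-1+1 = k; omega)]; show (i:ℕ) = 0; omega)
          have := (hNC.2.1 i).unique ⟨he, by simp⟩ ⟨hr, by rw [hiv]; simp⟩
          rw [this]
          exact mem_oddRing.2 ⟨_, rfl⟩
        · have hmk : m - 1 < k := by have := i.isLt; omega
          have hr := key (m-1) ⟨m-1, hmk⟩ rfl
          have hiv : i = qe ⟨m-1, hmk⟩ := Fin.ext (by
            rw [qe_val_of_lt (by show m-1+1 < k; have := i.isLt; omega)]
            show (i:ℕ) = 2*(m-1)+2; omega)
          have := (hNC.2.1 i).unique ⟨he, by simp⟩ ⟨hr, by rw [hiv]; simp⟩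
          rw [this]
          exact mem_oddRing.2 ⟨_, rfl⟩
      · have hmk : m < k := by have := i.isLt; omega
        have hr := key m ⟨m, hmk⟩ rfl
        have hiv : i = po ⟨m, hmk⟩ := Fin.ext (by show (i:ℕ) = 2*m+1; omega)
        have := (hNC.2.1 i).unique ⟨he, by simp⟩ ⟨hr, by rw [hiv]; simp⟩
        rw [this]
        exact mem_oddRing.2 ⟨_, rfl⟩
    · intro he
      obtain ⟨i, rfl⟩ := mem_oddRing.1 he
      exact key i.val i rfl
  -- start: the edge at vertex 0
  obtain ⟨i, hiM, hv⟩ := hvert ⟨0, hk0⟩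
  rcases hv with hv | hv
  · left
    apply stepA
    rw [← hv] at hiM
    have h1 : cyc (⟨0, hk0⟩ : Fin (2*k)) 1 = ⟨1, by omega⟩ := by
      apply Fin.ext
      show (0 + 1) % (2*k) = 1
      rw [Nat.mod_eq_of_lt (by omega)]
    rw [h1] at hiM
    exact hiM
  · -- vertex 0's edge is s(2k-1, 0)
    have hival : (i:ℕ) = 2*k-1 := by
      have h1 : (0:ℕ) = ((i:ℕ)+1) % (2*k) := congrArg Fin.val hv
      have := i.isLt
      rcases Nat.lt_or_ge (i.val+1) (2*k) with hc | hc
      · rw [Nat.mod_eq_of_lt hc] at h1; omega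
      · omega
    obtain ⟨i', hiM', hv'⟩ := hvert ⟨1, by omega⟩
    rcases hv' with hv' | hv'
    · right
      apply stepB
      rw [← hv'] at hiM'
      have h1 : cyc (⟨1, by omega⟩ : Fin (2*k)) 1 = ⟨2, by omega⟩ := by
        apply Fin.ext
        show (1 + 1) % (2*k) = 2
        rw [Nat.mod_eq_of_lt (by omega)]
      rw [h1] at hiM'
      exact hiM'
    · -- vertex 1's edge is s(0,1), conflicting with s(2k-1,0) at vertex 0
      exfalso
      have hival' : (i':ℕ) = 0 := by
        have h1 : (1:ℕ) = ((i':ℕ)+1) % (2*k) := congrArg Fin.val hv'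
        have := i'.isLt
        rcases Nat.lt_or_ge (i'.val+1) (2*k) with hc | hc
        · rw [Nat.mod_eq_of_lt hc] at h1; omega
        · rw [show (i':ℕ)+1 = 2*k by omega, Nat.mod_self] at h1
          omega
      have hcv' : (cyc i' 1 : ℕ) = 1 := by rw [cyc_val, hival']; rw [Nat.mod_eq_of_lt (by omega)]
      have hcv : (cyc i 1 : ℕ) = 0 := by
        rw [cyc_val, hival]
        have : 2*k-1+1 = 2*k := by omega
        rw [this, Nat.mod_self]
      have hmem : (⟨0, hk0⟩ : Fin (2*k)) ∈ s(i', cyc i' 1) := by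
        rw [Sym2.mem_iff]
        left
        exact Fin.ext hival'.symm
      have hmem' : (⟨0, hk0⟩ : Fin (2*k)) ∈ s(i, cyc i 1) := by
        rw [Sym2.mem_iff]
        right
        exact Fin.ext hcv.symm
      have := (hNC.2.1 ⟨0, hk0⟩).unique ⟨hiM', hmem⟩ ⟨hiM, hmem'⟩
      rw [Sym2.eq_iff] at this
      rcases this with ⟨h1, h2⟩ | ⟨h1, h2⟩
      · have := congrArg Fin.val h1
        omega
      · have hb := congrArg Fin.val h2
        rw [hcv'] at hb
        omega
end Classify
end RingProof
namespace RingProof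
section Rot
variable {n : ℕ}

def Btw (a b c : ℕ) : Prop := (a < c ∧ c < b) ∨ (b < c ∧ c < a)
def Sep (a b c d : ℕ) : Prop := (Btw a b c ∧ ¬ Btw a b d) ∨ (¬ Btw a b c ∧ Btw a b d)

lemma cross_irrefl (e : Sym2 (Fin n)) : ¬ Cross e e := by
  induction e using Sym2.ind with
  | _ x y =>
    intro h
    rcases cross_cases h with ⟨h1,h2,h3⟩|⟨h1,h2,h3⟩|⟨h1,h2,h3⟩|⟨h1,h2,h3⟩ <;> omega

lemma crossPair_iff_sep {a b c d : Fin n} (hab : a ≠ b) (hcd : c ≠ d)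
    (h1 : a ≠ c) (h2 : a ≠ d) (h3 : b ≠ c) (h4 : b ≠ d) :
    (Cross s(a,b) s(c,d) ∨ Cross s(c,d) s(a,b)) ↔ Sep (a:ℕ) (b:ℕ) (c:ℕ) (d:ℕ) := by
  have e0 : (a:ℕ) ≠ b := fun h => hab (Fin.ext h)
  have e1 : (c:ℕ) ≠ d := fun h => hcd (Fin.ext h)
  have e2 : (a:ℕ) ≠ c := fun h => h1 (Fin.ext h)
  have e3 : (a:ℕ) ≠ d := fun h => h2 (Fin.ext h)
  have e4 : (b:ℕ) ≠ c := fun h => h3 (Fin.ext h)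
  have e5 : (b:ℕ) ≠ d := fun h => h4 (Fin.ext h)
  constructor
  · rintro (h | h)
    · rcases cross_cases h with ⟨x1,x2,x3⟩|⟨x1,x2,x3⟩|⟨x1,x2,x3⟩|⟨x1,x2,x3⟩ <;>
        (unfold Sep Btw; omega)
    · rcases cross_cases h with ⟨x1,x2,x3⟩|⟨x1,x2,x3⟩|⟨x1,x2,x3⟩|⟨x1,x2,x3⟩ <;>
        (unfold Sep Btw; omega)
  · intro h
    unfold Sep Btw at h
    rcases h with ⟨hc, hd⟩ | ⟨hc, hd⟩
    · rcases hc with ⟨hc1, hc2⟩ | ⟨hc1, hc2⟩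
      · rcases (show (d:ℕ) < a ∨ (b:ℕ) < d by omega) with hd' | hd'
        · refine Or.inr ?_
          rw [show (s(c,d) : Sym2 (Fin n)) = s(d,c) from Sym2.eq_swap]
          exact cross_intro hd' (by omega) (by omega)
        · exact Or.inl (cross_intro hc1 hc2 hd')
      · rcases (show (d:ℕ) < b ∨ (a:ℕ) < d by omega) with hd' | hd'
        · refine Or.inr ?_
          rw [show (s(c,d) : Sym2 (Fin n)) = s(d,c) from Sym2.eq_swap,
            show (s(a,b) : Sym2 (Fin n)) = s(b,a) from Sym2.eq_swap]
          exact cross_intro hd' (by omega) (by omega)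
        · refine Or.inl ?_
          rw [show (s(a,b) : Sym2 (Fin n)) = s(b,a) from Sym2.eq_swap]
          exact cross_intro hc1 hc2 hd'
    · rcases hd with ⟨hd1, hd2⟩ | ⟨hd1, hd2⟩
      · rcases (show (c:ℕ) < a ∨ (b:ℕ) < c by omega) with hc' | hc'
        · exact Or.inr (cross_intro hc' hd1 hd2)
        · refine Or.inl ?_
          rw [show (s(c,d) : Sym2 (Fin n)) = s(d,c) from Sym2.eq_swap]
          exact cross_intro hd1 hd2 hc'
      · rcases (show (c:ℕ) < b ∨ (a:ℕ) < c by omega) with hc' | hc'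
        · refine Or.inr ?_
          rw [show (s(a,b) : Sym2 (Fin n)) = s(b,a) from Sym2.eq_swap]
          exact cross_intro hc' hd1 hd2
        · refine Or.inl ?_
          rw [show (s(c,d) : Sym2 (Fin n)) = s(d,c) from Sym2.eq_swap,
            show (s(a,b) : Sym2 (Fin n)) = s(b,a) from Sym2.eq_swap]
          exact cross_intro hd1 hd2 hc'

lemma sep_rot_nat {n a b c d : ℕ} (ha : a < n) (hb : b < n) (hc : c < n) (hd : d < n)
    (hab : a≠b) (hcd : c≠d) (hac : a≠c) (had : a≠d) (hbc : b≠c) (hbd : b≠d) :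
    Sep (if a = n-1 then 0 else a+1) (if b = n-1 then 0 else b+1)
      (if c = n-1 then 0 else c+1) (if d = n-1 then 0 else d+1) ↔ Sep a b c d := by
  unfold Sep Btw
  split_ifs <;> omega

def rotF (x : Fin n) : Fin n :=
  ⟨if (x:ℕ) = n-1 then 0 else (x:ℕ)+1, by
    have h1 := x.isLt
    have h2 := x.pos
    split_ifs <;> omega⟩

def rotG (x : Fin n) : Fin n :=
  ⟨if (x:ℕ) = 0 then n-1 else (x:ℕ)-1, by
    have h1 := x.isLt
    have h2 := x.pos
    split_ifs <;> omega⟩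

lemma rotF_val (x : Fin n) : (rotF x : ℕ) = if (x:ℕ) = n-1 then 0 else (x:ℕ)+1 := rfl

def rotE (n : ℕ) : Fin n ≃ Fin n where
  toFun := rotF
  invFun := rotG
  left_inv := by
    intro x
    have h1 := x.isLt
    apply Fin.ext
    show (if (if (x:ℕ) = n-1 then 0 else (x:ℕ)+1) = 0 then n-1
      else (if (x:ℕ) = n-1 then 0 else (x:ℕ)+1)-1) = (x:ℕ)
    split_ifs <;> (try contradiction) <;> omega
  right_inv := by
    intro x
    have h1 := x.isLt
    have h2 := x.pos
    apply Fin.ext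
    show (if (if (x:ℕ) = 0 then n-1 else (x:ℕ)-1) = n-1 then 0
      else (if (x:ℕ) = 0 then n-1 else (x:ℕ)-1)+1) = (x:ℕ)
    split_ifs <;> (try contradiction) <;> omega

lemma sep_rotE {a b c d : Fin n} (hab : a ≠ b) (hcd : c ≠ d)
    (h1 : a ≠ c) (h2 : a ≠ d) (h3 : b ≠ c) (h4 : b ≠ d) :
    Sep (rotE n a : ℕ) (rotE n b : ℕ) (rotE n c : ℕ) (rotE n d : ℕ) ↔
      Sep (a:ℕ) (b:ℕ) (c:ℕ) (d:ℕ) := by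
  have hre : ∀ x : Fin n, rotE n x = rotF x := fun _ => by simp [rotE]
  rw [hre, hre, hre, hre, rotF_val, rotF_val, rotF_val, rotF_val]
  exact sep_rot_nat a.isLt b.isLt c.isLt d.isLt
    (fun h => hab (Fin.ext h)) (fun h => hcd (Fin.ext h)) (fun h => h1 (Fin.ext h))
    (fun h => h2 (Fin.ext h)) (fun h => h3 (Fin.ext h)) (fun h => h4 (Fin.ext h))

lemma sep_rotE_symm {a b c d : Fin n} (hab : a ≠ b) (hcd : c ≠ d)
    (h1 : a ≠ c) (h2 : a ≠ d) (h3 : b ≠ c) (h4 : b ≠ d) :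
    Sep ((rotE n).symm a : ℕ) ((rotE n).symm b : ℕ) ((rotE n).symm c : ℕ)
      ((rotE n).symm d : ℕ) ↔ Sep (a:ℕ) (b:ℕ) (c:ℕ) (d:ℕ) := by
  have hinj := (rotE n).symm.injective
  have := sep_rotE (a := (rotE n).symm a) (b := (rotE n).symm b)
    (c := (rotE n).symm c) (d := (rotE n).symm d)
    (fun h => hab (hinj h)) (fun h => hcd (hinj h)) (fun h => h1 (hinj h))
    (fun h => h2 (hinj h)) (fun h => h3 (hinj h)) (fun h => h4 (hinj h))
  rw [Equiv.apply_symm_apply, Equiv.apply_symm_apply, Equiv.apply_symm_apply,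
    Equiv.apply_symm_apply] at this
  exact this.symm

lemma ncMatching_image (ρ : Fin n ≃ Fin n)
    (hsep : ∀ a b c d : Fin n, a ≠ b → c ≠ d → a ≠ c → a ≠ d → b ≠ c → b ≠ d →
      (Sep (ρ a : ℕ) (ρ b : ℕ) (ρ c : ℕ) (ρ d : ℕ) ↔ Sep (a:ℕ) (b:ℕ) (c:ℕ) (d:ℕ)))
    {M : Finset (Sym2 (Fin n))} (hM : IsNCMatching M) :
    IsNCMatching (M.image (Sym2.map ρ)) := by
  refine ⟨?_, ?_, ?_⟩
  · intro e he
    obtain ⟨e₀, he₀, rfl⟩ := Finset.mem_image.1 he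
    rw [Sym2.isDiag_map ρ.injective]
    exact hM.1 _ he₀
  · intro v
    obtain ⟨e, ⟨heM, hue⟩, huniq⟩ := hM.2.1 (ρ.symm v)
    refine ⟨Sym2.map ρ e, ⟨Finset.mem_image.2 ⟨e, heM, rfl⟩,
      Sym2.mem_map.2 ⟨ρ.symm v, hue, ρ.apply_symm_apply v⟩⟩, ?_⟩
    rintro e' ⟨he', hve'⟩
    obtain ⟨e₀, he₀, rfl⟩ := Finset.mem_image.1 he'
    obtain ⟨u, hu, hu2⟩ := Sym2.mem_map.1 hve'
    have : u = ρ.symm v := by rw [← hu2, Equiv.symm_apply_apply]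
    rw [this] at hu
    rw [huniq e₀ ⟨he₀, hu⟩]
  · intro e' he' f' hf' hcross
    obtain ⟨e₁, he₁, rfl⟩ := Finset.mem_image.1 he'
    obtain ⟨e₂, he₂, rfl⟩ := Finset.mem_image.1 hf'
    rcases eq_or_ne e₁ e₂ with rfl | hne
    · exact cross_irrefl _ hcross
    · induction e₁ using Sym2.ind with
    | _ a b =>
      induction e₂ using Sym2.ind with
      | _ c d =>
        have hab : a ≠ b := fun h => hM.1 _ he₁ (Sym2.mk_isDiag_iff.2 h)
        have hcd : c ≠ d := fun h => hM.1 _ he₂ (Sym2.mk_isDiag_iff.2 h)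
        have hvdisj : ∀ x : Fin n, x ∈ (s(a,b) : Sym2 (Fin n)) →
            x ∈ (s(c,d) : Sym2 (Fin n)) → False := by
          intro x hx1 hx2
          exact hne ((hM.2.1 x).unique ⟨he₁, hx1⟩ ⟨he₂, hx2⟩)
        have d1 : a ≠ c := fun h => hvdisj a (by simp) (by rw [h]; simp)
        have d2 : a ≠ d := fun h => hvdisj a (by simp) (by rw [h]; simp)
        have d3 : b ≠ c := fun h => hvdisj b (by simp) (by rw [h]; simp)
        have d4 : b ≠ d := fun h => hvdisj b (by simp) (by rw [h]; simp)
        rw [Sym2.map_pair_eq, Sym2.map_pair_eq] at hcross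
        have hsepρ := (crossPair_iff_sep (ρ.injective.ne hab) (ρ.injective.ne hcd)
          (ρ.injective.ne d1) (ρ.injective.ne d2) (ρ.injective.ne d3)
          (ρ.injective.ne d4)).1 (Or.inl hcross)
        have hsep' := (hsep a b c d hab hcd d1 d2 d3 d4).1 hsepρ
        rcases (crossPair_iff_sep hab hcd d1 d2 d3 d4).2 hsep' with h | h
        · exact hM.2.2 _ he₁ _ he₂ h
        · exact hM.2.2 _ he₂ _ he₁ h

end Rot
end RingProof
namespace RingProof
section Final
variable {k : ℕ}

lemma rotE_apply {n : ℕ} (x : Fin n) : rotE n x = rotF x := by simp [rotE]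

lemma rot_odd_edge (hk : 2 ≤ k) (j : Fin k) :
    Sym2.map (rotE (2*k)) s(po j, qe j) = s(pe (rotE k j), po (rotE k j)) := by
  rw [Sym2.map_pair_eq, rotE_apply, rotE_apply, rotE_apply]
  have h1 : rotF (po j) = pe (rotF j) := by
    apply Fin.ext
    show (if (2*j.val+1) = 2*k-1 then 0 else (2*j.val+1)+1) =
      2 * (if (j:ℕ) = k-1 then 0 else (j:ℕ)+1)
    have := j.isLt
    split_ifs <;> omega
  have h2 : rotF (qe j) = po (rotF j) := by
    apply Fin.ext
    have hj := j.isLt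
    rcases eq_or_ne (j.val+1) k with he | hne
    · have hq : (qe j : ℕ) = 0 := qe_val_last he
      show (if (qe j : ℕ) = 2*k-1 then 0 else (qe j : ℕ)+1) =
        2 * (if (j:ℕ) = k-1 then 0 else (j:ℕ)+1) + 1
      rw [hq]
      split_ifs <;> omega
    · have hq : (qe j : ℕ) = 2*j.val+2 := qe_val_of_lt (by omega)
      show (if (qe j : ℕ) = 2*k-1 then 0 else (qe j : ℕ)+1) =
        2 * (if (j:ℕ) = k-1 then 0 else (j:ℕ)+1) + 1
      rw [hq]
      split_ifs <;> omega
  rw [h1, h2]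

lemma disjCompat_oddRing_iff (hk : 2 ≤ k) {X : Finset (Sym2 (Fin (2*k)))} :
    DisjCompat (oddRing k) X ↔ ∀ i : Fin k, s(po i, qe i) ∉ X := by
  constructor
  · intro h i
    exact h.1 _ (mem_oddRing.2 ⟨i, rfl⟩)
  · intro h
    constructor
    · intro e he
      obtain ⟨i, rfl⟩ := mem_oddRing.1 he
      exact h i
    · intro e he f hf
      obtain ⟨i, rfl⟩ := mem_oddRing.1 he
      rcases eq_or_ne (i.val+1) k with hlast | hne
      · have hswap : (s(po i, qe i) : Sym2 (Fin (2*k))) = s(qe i, po i) := Sym2.eq_swap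
        rw [hswap]
        have hcond : ((po i : ℕ)) = 2*k-1 ∧ ((qe i : ℕ)) = 0 := by
          refine ⟨?_, qe_val_last hlast⟩
          show 2*i.val+1 = 2*k-1
          omega
        exact ⟨noCross_left (Or.inr ⟨hcond.2, by omega⟩) f,
          noCross_right (Or.inr ⟨hcond.2, by omega⟩) f⟩
      · have hadj : (qe i : ℕ) = (po i : ℕ) + 1 := by
          rw [qe_val_of_lt (by have := i.isLt; omega)]
          show 2*i.val+2 = (2*i.val+1)+1
          rfl
        exact ⟨noCross_left (Or.inl hadj) f, noCross_right (Or.inl hadj) f⟩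

lemma map_symm_cancel {α : Type*} (ρ : α ≃ α) (x : Sym2 α) :
    Sym2.map ρ (Sym2.map ρ.symm x) = x := by
  rw [Sym2.map_map, Equiv.self_comp_symm, Sym2.map_id, id]

lemma map_symm_cancel' {α : Type*} (ρ : α ≃ α) (x : Sym2 α) :
    Sym2.map ρ.symm (Sym2.map ρ x) = x := by
  rw [Sym2.map_map, Equiv.symm_comp_self, Sym2.map_id, id]

theorem card_odd (k : ℕ) (hk : 2 ≤ k) :
    Nat.card {M' : Finset (Sym2 (Fin (2*k))) //
        IsNCMatching M' ∧ DisjCompat (oddRing k) M'} =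
      Nat.card {M'' : Finset (Sym2 (Fin (2*k))) //
        IsNCMatching M'' ∧ DisjCompat (evenRing k) M''} := by
  have hsep := fun (a b c d : Fin (2*k)) hab hcd h1 h2 h3 h4 =>
    sep_rotE (a := a) (b := b) (c := c) (d := d) hab hcd h1 h2 h3 h4
  have hsep' := fun (a b c d : Fin (2*k)) hab hcd h1 h2 h3 h4 =>
    sep_rotE_symm (a := a) (b := b) (c := c) (d := d) hab hcd h1 h2 h3 h4
  apply Nat.card_eq_of_bijective
    (f := fun X : {M' : Finset (Sym2 (Fin (2*k))) //
        IsNCMatching M' ∧ DisjCompat (oddRing k) M'} =>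
      (⟨X.1.image (Sym2.map (rotE (2*k))), ncMatching_image _ hsep X.2.1, by
        rw [disjCompat_evenRing_iff]
        intro i hmem
        obtain ⟨e, heX, hmape⟩ := Finset.mem_image.1 hmem
        have hoe := rot_odd_edge hk ((rotE k).symm i)
        rw [Equiv.apply_symm_apply] at hoe
        have : e = s(po ((rotE k).symm i), qe ((rotE k).symm i)) :=
          Sym2.map.injective (rotE (2*k)).injective (by rw [hmape, hoe])
        rw [this] at heX
        exact X.2.2.1 _ (mem_oddRing.2 ⟨_, rfl⟩) heX⟩ :
        {M'' : Finset (Sym2 (Fin (2*k))) //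
          IsNCMatching M'' ∧ DisjCompat (evenRing k) M''}))
  constructor
  · rintro ⟨A, hA⟩ ⟨B, hB⟩ h
    have := congrArg Subtype.val h
    simp only at this
    exact Subtype.ext (Finset.image_injective
      (Sym2.map.injective (rotE (2*k)).injective) this)
  · rintro ⟨M'', h1, h2⟩
    have hNC' : IsNCMatching (M''.image (Sym2.map (rotE (2*k)).symm)) :=
      ncMatching_image _ hsep' h1
    have hDC' : DisjCompat (oddRing k) (M''.image (Sym2.map (rotE (2*k)).symm)) := by
      rw [disjCompat_oddRing_iff hk]
      intro j hmem
      obtain ⟨e₀, he₀, heq⟩ := Finset.mem_image.1 hmem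
      have : e₀ = s(pe (rotE k j), po (rotE k j)) := by
        rw [← rot_odd_edge hk j, ← heq, map_symm_cancel]
      rw [this] at he₀
      exact h2.1 _ (mem_evenRing.2 ⟨_, rfl⟩) he₀
    refine ⟨⟨M''.image (Sym2.map (rotE (2*k)).symm), hNC', hDC'⟩, ?_⟩
    apply Subtype.ext
    show (M''.image (Sym2.map (rotE (2*k)).symm)).image (Sym2.map (rotE (2*k))) = M''
    rw [Finset.image_image]
    have : (Sym2.map (rotE (2*k)) ∘ Sym2.map (rotE (2*k)).symm) = id :=
      funext (map_symm_cancel (rotE (2*k)))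
    rw [this, Finset.image_id]

end Final
end RingProof

/-- The degree of a ring of size `k ≥ 2` in the disjoint compatibility graph
equals the number of non-crossing partitions of a cyclically ordered `k`-set
without singleton parts. -/
theorem ring_degree_eq_ncPartitions (k : ℕ) (hk : 2 ≤ k)
    (M : Finset (Sym2 (Fin (2 * k)))) (hM : IsRing M) :
    Nat.card {M' : Finset (Sym2 (Fin (2 * k))) //
        IsNCMatching M' ∧ DisjCompat M M'} =
      Nat.card {P : Finset (Finset (Fin k)) // IsNCPartitionNoSingletons P} := by
  rcases RingProof.ring_eq hk hM with rfl | rfl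
  · exact RingProof.card_even k
  · exact (RingProof.card_odd k hk).trans (RingProof.card_even k)
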